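/- For every integer n ≥ 9, Left wins the Mutual Failures Variant of the Mixed Deletion Game on the path P_n regardless of which player moves first; i.e., P_n > 0 as a combinatorial game. -/

import Mathlib

universe u

namespace SetTheory

/-- Pre-game, as in the former `Mathlib.SetTheory.Game.PGame` (removed from Mathlib). -/
inductive PGame : Type (u + 1)
  | mk : ∀ α β : Type u, (α → PGame) → (β → PGame) → PGame

namespace PGame

/-- Inner recursion (on `y`) of the simultaneous definition of `≤` and `⧏`, given the
values `fL i = leLF (xL i)` and `fR j = leLF (xR j)` for the options of `x`. -/
def leLFAux {xl xr : Type u} (fL : xl → PGame.{u} → Prop × Prop)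
    (fR : xr → PGame.{u} → Prop × Prop) : PGame.{u} → Prop × Prop
  | mk yl yr yL yR =>
    ((∀ i, (fL i (mk yl yr yL yR)).2) ∧ ∀ j, (leLFAux fL fR (yR j)).2,
      (∃ i, (leLFAux fL fR (yL i)).1) ∨ ∃ j, (fR j (mk yl yr yL yR)).1)

/-- Simultaneous definition of `≤` and `⧏` (`.1` is `x ≤ y`, `.2` is `x ⧏ y`). -/
def leLF : PGame.{u} → PGame.{u} → Prop × Prop
  | mk _ _ xL xR => leLFAux (fun i => leLF (xL i)) (fun j => leLF (xR j))

instance : LE PGame.{u} := ⟨fun x y => (leLF x y).1⟩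

/-- The less or fuzzy relation. -/
def LF (x y : PGame.{u}) : Prop := ¬y ≤ x

infix:50 " ⧏ " => PGame.LF

instance : LT PGame.{u} := ⟨fun x y => x ≤ y ∧ x ⧏ y⟩

instance : Zero PGame.{u} := ⟨mk PEmpty PEmpty PEmpty.elim PEmpty.elim⟩

instance : One PGame.{u} := ⟨mk PUnit PEmpty (fun _ => 0) PEmpty.elim⟩

/-- Negation of a pre-game. -/
def neg : PGame.{u} → PGame.{u}
  | mk l r L R => mk r l (fun i => neg (R i)) (fun i => neg (L i))

instance : Neg PGame.{u} := ⟨neg⟩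

/-- Inner recursion (on `y`) of the sum, given `fL i = add (xL i)`, `fR j = add (xR j)`. -/
def addAux {xl xr : Type u} (fL : xl → PGame.{u} → PGame.{u})
    (fR : xr → PGame.{u} → PGame.{u}) : PGame.{u} → PGame.{u}
  | mk yl yr yL yR =>
    mk (xl ⊕ yl) (xr ⊕ yr)
      (Sum.rec (fun i => fL i (mk yl yr yL yR)) (fun i => addAux fL fR (yL i)))
      (Sum.rec (fun i => fR i (mk yl yr yL yR)) (fun i => addAux fL fR (yR i)))

/-- Sum of pre-games: `x + y = {xL + y, x + yL | xR + y, x + yR}`. -/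
def add : PGame.{u} → PGame.{u} → PGame.{u}
  | mk _ _ xL xR => addAux (fun i => add (xL i)) (fun j => add (xR j))

instance : Add PGame.{u} := ⟨add⟩

/-- The game `⋆ = {0 | 0}`. -/
def star : PGame.{u} := mk PUnit PUnit (fun _ => 0) (fun _ => 0)

/-- The nim game `*o`: either player may move to `*o'` for any `o' < o`. -/
noncomputable def nim (o : Ordinal.{u}) : PGame.{u} :=
  mk o.ToType o.ToType
    (fun x => nim (Ordinal.typein (α := o.ToType) (· < ·) x))
    (fun x => nim (Ordinal.typein (α := o.ToType) (· < ·) x))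
termination_by o
decreasing_by all_goals exact Ordinal.typein_lt_self x

end PGame

end SetTheory

open SetTheory PGame

namespace MixedDeletion

/-- The degree of a vertex `v` with respect to an edge set `E`. -/
def deg (E : Finset (Sym2 ℕ)) (v : ℕ) : ℕ := (E.filter (fun e => v ∈ e)).card

/-- The graph position with vertex set `V` and edge set `E` has no isolated vertex. -/
def NoIsol (V : Finset ℕ) (E : Finset (Sym2 ℕ)) : Prop := ∀ v ∈ V, 0 < deg E v

/-- Result of Left deleting the vertex `v`: remove `v` and all incident edges. -/
def delV (V : Finset ℕ) (E : Finset (Sym2 ℕ)) (v : ℕ) : Finset ℕ × Finset (Sym2 ℕ) :=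
  (V.erase v, E.filter (fun e => v ∉ e))

/-- Left may legally delete vertex `v` under the base (Classic) rules:
`v` is a vertex and the deletion creates no isolated vertex. -/
def LeftOK (V : Finset ℕ) (E : Finset (Sym2 ℕ)) (v : ℕ) : Prop :=
  v ∈ V ∧ NoIsol (V.erase v) (E.filter (fun e => v ∉ e))

/-- Right may legally delete edge `e` under the base (Classic) rules:
`e` is an edge and the deletion creates no isolated vertex. -/
def RightOK (V : Finset ℕ) (E : Finset (Sym2 ℕ)) (e : Sym2 ℕ) : Prop :=
  e ∈ E ∧ NoIsol V (E.erase e)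

/-- The Classic Variant of the Mixed Deletion Game, as a partizan game:
Left deletes a vertex (and incident edges), Right deletes an edge,
and no move may create an isolated vertex. -/
def classicG : Finset ℕ → Finset (Sym2 ℕ) → PGame
  | V, E =>
    PGame.mk {v : ℕ // LeftOK V E v} {e : Sym2 ℕ // RightOK V E e}
      (fun x => classicG (V.erase x.val) (E.filter (fun e => x.val ∉ e)))
      (fun x => classicG V (E.erase x.val))
  termination_by V E => V.card + E.card
  decreasing_by
  · have h1 : (V.erase x.val).card < V.card := Finset.card_erase_lt_of_mem x.2.1
    have h2 : (E.filter (fun e => x.val ∉ e)).card ≤ E.card := Finset.card_filter_le _ _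
    omega
  · have h1 : (E.erase x.val).card < E.card := Finset.card_erase_lt_of_mem x.2.1
    omega

/-- The Forbidden Leaf Variant: as the Classic Variant, but Left may not
delete leaf vertices (vertices of degree one). -/
def flG : Finset ℕ → Finset (Sym2 ℕ) → PGame
  | V, E =>
    PGame.mk {v : ℕ // LeftOK V E v ∧ deg E v ≠ 1} {e : Sym2 ℕ // RightOK V E e}
      (fun x => flG (V.erase x.val) (E.filter (fun e => x.val ∉ e)))
      (fun x => flG V (E.erase x.val))
  termination_by V E => V.card + E.card
  decreasing_by
  · have h1 : (V.erase x.val).card < V.card := Finset.card_erase_lt_of_mem x.2.1.1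
    have h2 : (E.filter (fun e => x.val ∉ e)).card ≤ E.card := Finset.card_filter_le _ _
    omega
  · have h1 : (E.erase x.val).card < E.card := Finset.card_erase_lt_of_mem x.2.1
    omega

/-- The Mutual Failures Variant: as the Classic Variant, but in any graph
position a player has a legal move if and only if the opponent does; i.e. a
base-rules move is legal only if the opponent also has a base-rules move. -/
def mfG : Finset ℕ → Finset (Sym2 ℕ) → PGame
  | V, E =>
    PGame.mk {v : ℕ // LeftOK V E v ∧ ∃ e, RightOK V E e}
      {e : Sym2 ℕ // RightOK V E e ∧ ∃ v, LeftOK V E v}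
      (fun x => mfG (V.erase x.val) (E.filter (fun e => x.val ∉ e)))
      (fun x => mfG V (E.erase x.val))
  termination_by V E => V.card + E.card
  decreasing_by
  · have h1 : (V.erase x.val).card < V.card := Finset.card_erase_lt_of_mem x.2.1.1
    have h2 : (E.filter (fun e => x.val ∉ e)).card ≤ E.card := Finset.card_filter_le _ _
    omega
  · have h1 : (E.erase x.val).card < E.card := Finset.card_erase_lt_of_mem x.2.1.1
    omega

/-- Edge set of the path graph on vertices `0, 1, …, n-1`. -/
def pathE (n : ℕ) : Finset (Sym2 ℕ) := (Finset.range (n - 1)).image (fun i => s(i, i + 1))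

/-- Edge set of the cycle graph on vertices `0, 1, …, n-1`. -/
def cycleE (n : ℕ) : Finset (Sym2 ℕ) := (Finset.range n).image (fun i => s(i, (i + 1) % n))

/-- Edge set of the complete graph on vertices `0, 1, …, n-1`. -/
def completeE (n : ℕ) : Finset (Sym2 ℕ) := (Finset.range n).sym2.filter (fun e => ¬ e.IsDiag)

/-- The path position `P_n` in the Classic Variant. -/
def classicPath (n : ℕ) : PGame := classicG (Finset.range n) (pathE n)

/-- The cycle position `C_n` in the Classic Variant. -/
def classicCycle (n : ℕ) : PGame := classicG (Finset.range n) (cycleE n)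

/-- The complete graph position `K_n` in the Classic Variant. -/
def classicComplete (n : ℕ) : PGame := classicG (Finset.range n) (completeE n)

/-- The path position `P_n` in the Forbidden Leaf Variant. -/
def flPath (n : ℕ) : PGame := flG (Finset.range n) (pathE n)

/-- The cycle position `C_n` in the Forbidden Leaf Variant. -/
def flCycle (n : ℕ) : PGame := flG (Finset.range n) (cycleE n)

/-- The complete graph position `K_n` in the Forbidden Leaf Variant. -/
def flComplete (n : ℕ) : PGame := flG (Finset.range n) (completeE n)

/-- The path position `P_n` in the Mutual Failures Variant. -/
def mfPath (n : ℕ) : PGame := mfG (Finset.range n) (pathE n)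

/-- The cycle position `C_n` in the Mutual Failures Variant. -/
def mfCycle (n : ℕ) : PGame := mfG (Finset.range n) (cycleE n)

/-- The complete graph position `K_n` in the Mutual Failures Variant. -/
def mfComplete (n : ℕ) : PGame := mfG (Finset.range n) (completeE n)

/-- The partizan game equal to a natural number `n`. -/
def natPG : ℕ → PGame
  | 0 => 0
  | n + 1 => natPG n + 1

/-- The partizan game equal to an integer `z`. -/
def intPG (z : ℤ) : PGame := if 0 ≤ z then natPG z.toNat else -natPG (-z).toNat

/-- The game up, `↑ = {0 | *}`. -/
def up : PGame := PGame.mk PUnit PUnit (fun _ => 0) (fun _ => star)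

/-- The game down, `↓ = {* | 0}`. -/
def down : PGame := -up

/-- The sum of `n` copies of up. -/
def natUp : ℕ → PGame
  | 0 => 0
  | n + 1 => natUp n + up

/-- The game `z·↑`: `|z|` copies of up if `z ≥ 0`, and `|z|` copies of down otherwise. -/
def zUp (z : ℤ) : PGame := if 0 ≤ z then natUp z.toNat else -natUp (-z).toNat

/-- Two games have the same outcome: Left wins moving first in one iff in the other,
and Right wins moving first in one iff in the other. -/
def SameOutcome (A B : PGame) : Prop := (0 ⧏ A ↔ 0 ⧏ B) ∧ (A ⧏ 0 ↔ B ⧏ 0)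

/-- Far-star equivalence: `G + X + ✶` and `H + X + ✶` have the same outcome for
every game `X`, where `✶` (far star) is any nim-heap `*k` with `k ≥ 2`. -/
def FarStarEquiv (G H : PGame) : Prop :=
  ∀ (X : PGame) (k : ℕ), 2 ≤ k → SameOutcome (G + X + nim k) (H + X + nim k)

/-- `G` has atomic weight `z` if `G` is far-star equivalent to `z·↑`. -/
def AtomicWeight (G : PGame) (z : ℤ) : Prop := FarStarEquiv G (zUp z)

/-- A game is all-small if in every subposition Left has a move iff Right has a move. -/
def AllSmall : PGame → Prop
  | PGame.mk l r L R =>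
    (Nonempty l ↔ Nonempty r) ∧ (∀ i, AllSmall (L i)) ∧ (∀ j, AllSmall (R j))

end MixedDeletion

/-!
Every position reachable from `P_n` is a disjoint union of paths with at least two vertices each,
and only the multiset of their numbers of vertices matters. Left deletes an end vertex of a path
or splits it by deleting a vertex at distance at least two from both ends; Right cuts a path into
two paths of at least two vertices. Right has a move exactly when some path has four or more
vertices, and then so does Left, so the game goes on until no path is that long; meanwhile a
path with three vertices is a spare move for Left. We describe explicitly a class of multisets
from which Left wins moving first and a class from which she wins moving second: from the first
class Left can always move into the second, and every move of Right leads from the second class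
back into the first. A single path with at least nine vertices lies in both classes.
-/

namespace SetTheory.PGame

theorem leLF_mk_mk {xl xr : Type u} (xL : xl → PGame.{u}) (xR : xr → PGame.{u})
    {yl yr : Type u} (yL : yl → PGame.{u}) (yR : yr → PGame.{u}) :
    leLF (mk xl xr xL xR) (mk yl yr yL yR) =
      ((∀ i, (leLF (xL i) (mk yl yr yL yR)).2) ∧ ∀ j, (leLF (mk xl xr xL xR) (yR j)).2,
        (∃ i, (leLF (mk xl xr xL xR) (yL i)).1) ∨ ∃ j, (leLF (xR j) (mk yl yr yL yR)).1) :=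
  rfl

theorem leLF_snd_iff_not_fst (x y : PGame.{u}) :
    ((leLF x y).2 ↔ ¬(leLF y x).1) ∧ ((leLF y x).2 ↔ ¬(leLF x y).1) := by
  induction x generalizing y with
  | mk xl xr xL xR ihxL ihxR =>
    induction y with
    | mk yl yr yL yR ihyL ihyR =>
      simp only [leLF_mk_mk, not_and_or, not_forall]
      constructor
      · refine or_congr (exists_congr fun i => ?_) (exists_congr fun j => ?_)
        · rw [(ihyL i).2, not_not]
        · rw [(ihxR j (mk yl yr yL yR)).2, not_not]
      · refine or_congr (exists_congr fun i => ?_) (exists_congr fun j => ?_)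
        · rw [(ihxL i (mk yl yr yL yR)).1, not_not]
        · rw [(ihyR j).1, not_not]

theorem zero_le_mk {xl xr : Type u} {xL : xl → PGame.{u}} {xR : xr → PGame.{u}} :
    0 ≤ mk xl xr xL xR ↔ ∀ j, 0 ⧏ xR j :=
  ⟨fun h j => (leLF_snd_iff_not_fst 0 (xR j)).1.1 (h.2 j),
    fun h => ⟨fun i => i.elim, fun j => (leLF_snd_iff_not_fst 0 (xR j)).1.2 (h j)⟩⟩

theorem zero_lf_mk {xl xr : Type u} {xL : xl → PGame.{u}} {xR : xr → PGame.{u}} :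
    0 ⧏ mk xl xr xL xR ↔ ∃ i, 0 ≤ xL i := by
  refine (leLF_snd_iff_not_fst 0 (mk xl xr xL xR)).1.symm.trans ?_
  exact ⟨fun h => h.elim id fun ⟨j, _⟩ => j.elim, Or.inl⟩

end SetTheory.PGame

namespace MixedDeletion

inductive LeftMove : Multiset ℕ → Multiset ℕ → Prop
  | shrink (m : ℕ) (R : Multiset ℕ) : 2 ≤ m → LeftMove ((m + 1) ::ₘ R) (m ::ₘ R)
  | split (p q : ℕ) (R : Multiset ℕ) : 2 ≤ p → 2 ≤ q →
      LeftMove ((p + 1 + q) ::ₘ R) (p ::ₘ q ::ₘ R)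

inductive RightMove : Multiset ℕ → Multiset ℕ → Prop
  | cut (p q : ℕ) (R : Multiset ℕ) : 2 ≤ p → 2 ≤ q → RightMove ((p + q) ::ₘ R) (p ::ₘ q ::ₘ R)

theorem RightMove.cons {M M' : Multiset ℕ} (h : RightMove M M') (m : ℕ) :
    RightMove (m ::ₘ M) (m ::ₘ M') := by
  obtain ⟨p, q, R, hp, hq⟩ := h
  rw [Multiset.cons_swap m (p + q), Multiset.cons_swap m p, Multiset.cons_swap m q]
  exact .cut p q (m ::ₘ R) hp hq

/-- The number of paths with at least four vertices: Right can move only inside these. -/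
def numLong (M : Multiset ℕ) : ℕ := M.countP (4 ≤ ·)

/-- Some path is long, and the long paths are not exactly two paths `P_4` with no `P_3` around. -/
def LeftWinsFirst (M : Multiset ℕ) : Prop :=
  1 ≤ numLong M ∧ ¬(M.count 3 = 0 ∧ M.count 4 = 2 ∧ numLong M = 2)

/-- The multiset of long paths is none of `{4}`, `{5}`, `{6}`, nor, when there is no `P_3`,
`{4, 4, 4}`, `{4, 6}`, `{8}`. -/
def LeftWinsSecond (M : Multiset ℕ) : Prop :=
  ¬(numLong M = 1 ∧ (M.count 4 = 1 ∨ M.count 5 = 1 ∨ M.count 6 = 1)) ∧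
  ¬(M.count 3 = 0 ∧ (M.count 4 = 3 ∧ numLong M = 3 ∨
    M.count 4 = 1 ∧ M.count 6 = 1 ∧ numLong M = 2 ∨ M.count 8 = 1 ∧ numLong M = 1))

theorem numLong_eq_sum_count (M : Multiset ℕ) : numLong M =
    M.count 4 + M.count 5 + M.count 6 + M.count 7 + M.count 8 + M.countP (9 ≤ ·) := by
  induction M using Multiset.induction_on with
  | empty => simp [numLong]
  | cons a M ih =>
    simp only [numLong, Multiset.count_cons, Multiset.countP_cons] at *
    split_ifs <;> omega

theorem LeftWinsSecond.leftWinsFirst_of_rightMove {M M' : Multiset ℕ} (h : LeftWinsSecond M)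
    (hM : RightMove M M') : LeftWinsFirst M' := by
  obtain ⟨p, q, R, hp, hq⟩ := hM
  have := numLong_eq_sum_count R
  grind (splits := 40) [LeftWinsFirst, LeftWinsSecond, numLong, Multiset.count_cons,
    Multiset.countP_cons]

theorem exists_leftMove_of_numLong_eq_one {M : Multiset ℕ} (h : numLong M = 1) :
    ∃ M', LeftMove M M' ∧ LeftWinsSecond M' := by
  obtain ⟨m, hmM, hm⟩ := Multiset.countP_pos.1 (h ▸ one_pos : 0 < numLong M)
  obtain ⟨R, rfl⟩ := Multiset.exists_cons_of_mem hmM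
  have hR : numLong R = 0 := by
    simp only [numLong, Multiset.countP_cons, if_pos hm] at h ⊢
    omega
  have := numLong_eq_sum_count R
  obtain rfl | rfl | rfl | rfl | rfl | ⟨k, rfl, hk⟩ :
      m = 4 ∨ m = 5 ∨ m = 6 ∨ m = 7 ∨ m = 9 ∨ ∃ k, m = k + 1 ∧ (k = 7 ∨ 9 ≤ k) := by
    obtain h | h : m ≤ 9 ∨ 10 ≤ m := by omega
    · interval_cases m <;> simp
    · exact Or.inr <| Or.inr <| Or.inr <| Or.inr <| Or.inr ⟨m - 1, by omega, by omega⟩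
  on_goal 1 => refine ⟨_, .shrink 3 R (by norm_num), ?_⟩
  on_goal 2 => refine ⟨_, .split 2 2 R le_rfl le_rfl, ?_⟩
  on_goal 3 => refine ⟨_, .split 2 3 R le_rfl (by norm_num), ?_⟩
  on_goal 4 => refine ⟨_, .split 3 3 R (by norm_num) (by norm_num), ?_⟩
  on_goal 5 => refine ⟨_, .split 4 4 R (by norm_num) (by norm_num), ?_⟩
  on_goal 6 => refine ⟨_, .shrink k R (by omega), ?_⟩
  all_goals grind [LeftWinsSecond, numLong, Multiset.count_cons, Multiset.countP_cons]

theorem exists_leftMove_of_two_le_numLong {M : Multiset ℕ} (hF : LeftWinsFirst M)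
    (h : 2 ≤ numLong M) : ∃ M', LeftMove M M' ∧ LeftWinsSecond M' := by
  by_cases h68 : ∃ m ∈ M, m = 6 ∨ 8 ≤ m
  · obtain ⟨m, hmM, hm⟩ := h68
    obtain ⟨R, rfl⟩ := Multiset.exists_cons_of_mem hmM
    obtain ⟨k, rfl⟩ : ∃ k, m = k + 1 := ⟨m - 1, by omega⟩
    refine ⟨_, .shrink k R (by omega), ?_⟩
    have := numLong_eq_sum_count R
    grind [LeftWinsSecond, numLong, Multiset.count_cons, Multiset.countP_cons]
  have h68' : M.count 6 = 0 ∧ M.count 8 = 0 ∧ M.countP (9 ≤ ·) = 0 := by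
    simp only [Multiset.count_eq_zero, Multiset.countP_eq_zero]
    grind
  clear h68
  have hM := numLong_eq_sum_count M
  by_cases h4 : 3 ≤ numLong M ∧ 0 < M.count 4
  · obtain ⟨R, rfl⟩ := Multiset.exists_cons_of_mem (Multiset.count_pos.1 h4.2)
    refine ⟨_, .shrink 3 R (by norm_num), ?_⟩
    have := numLong_eq_sum_count R
    grind [LeftWinsSecond, numLong, Multiset.count_cons, Multiset.countP_cons]
  by_cases h5 : 0 < M.count 5
  · obtain ⟨R, rfl⟩ := Multiset.exists_cons_of_mem (Multiset.count_pos.1 h5)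
    refine ⟨_, .shrink 4 R (by norm_num), ?_⟩
    have := numLong_eq_sum_count R
    grind [LeftWinsSecond, numLong, Multiset.count_cons, Multiset.countP_cons]
  by_cases h7 : 0 < M.count 7
  · obtain ⟨R, rfl⟩ := Multiset.exists_cons_of_mem (Multiset.count_pos.1 h7)
    refine ⟨_, .split 2 4 R le_rfl (by norm_num), ?_⟩
    have := numLong_eq_sum_count R
    grind [LeftWinsSecond, numLong, Multiset.count_cons, Multiset.countP_cons]
  have h3 : 3 ∈ M := by
    rw [← Multiset.count_pos]
    grind [LeftWinsFirst]
  obtain ⟨R, rfl⟩ := Multiset.exists_cons_of_mem h3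
  refine ⟨_, .shrink 2 R le_rfl, ?_⟩
  have := numLong_eq_sum_count R
  grind [LeftWinsFirst, LeftWinsSecond, numLong, Multiset.count_cons, Multiset.countP_cons]

theorem LeftWinsFirst.exists_leftMove {M : Multiset ℕ} (h : LeftWinsFirst M) :
    ∃ M', LeftMove M M' ∧ LeftWinsSecond M' := by
  obtain h1 | h2 : numLong M = 1 ∨ 2 ≤ numLong M := by have := h.1; omega
  · exact exists_leftMove_of_numLong_eq_one h1
  · exact exists_leftMove_of_two_le_numLong h h2

theorem noIsol_iff {V : Finset ℕ} {E : Finset (Sym2 ℕ)} :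
    NoIsol V E ↔ ∀ v ∈ V, ∃ e ∈ E, v ∈ e := by
  simp only [NoIsol, deg, Finset.card_pos, Finset.filter_nonempty_iff]

/-- `segV b m` and `segE b m` form the path on the `m` consecutive vertices `b, …, b + m - 1`. -/
def segV (b m : ℕ) : Finset ℕ := Finset.Ico b (b + m)

def segE (b m : ℕ) : Finset (Sym2 ℕ) := (segV b (m - 1)).image fun i => s(i, i + 1)

theorem mem_segV {b m v : ℕ} : v ∈ segV b m ↔ b ≤ v ∧ v < b + m := Finset.mem_Ico

theorem mem_segE {b m : ℕ} {e : Sym2 ℕ} :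
    e ∈ segE b m ↔ ∃ i, (b ≤ i ∧ i + 1 < b + m) ∧ s(i, i + 1) = e := by
  simp only [segE, Finset.mem_image, mem_segV]
  exact exists_congr fun i => and_congr_left' (by omega)

theorem mem_segV_of_mem_segE {b m v : ℕ} {e : Sym2 ℕ} (he : e ∈ segE b m) (hv : v ∈ e) :
    v ∈ segV b m := by
  obtain ⟨i, hi, rfl⟩ := mem_segE.1 he
  rw [Sym2.mem_iff] at hv
  rw [mem_segV]
  omega

theorem disjoint_segV {b p c q : ℕ} (h : b + p ≤ c) : Disjoint (segV b p) (segV c q) :=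
  Finset.disjoint_left.2 fun v hv hv' => by rw [mem_segV] at hv hv'; omega

theorem segV_add (b p q : ℕ) : segV b (p + q) = segV b p ∪ segV (b + p) q := by
  ext v; simp only [mem_segV, Finset.mem_union]; omega

theorem segV_erase_left (b m : ℕ) : (segV b (m + 1)).erase b = segV (b + 1) m := by
  ext v; simp only [mem_segV, Finset.mem_erase]; omega

theorem segV_erase_add (b p q : ℕ) :
    (segV b (p + 1 + q)).erase (b + p) = segV b p ∪ segV (b + p + 1) q := by
  ext v; simp only [mem_segV, Finset.mem_erase, Finset.mem_union]; omega

theorem injective_sym2_mk_succ : Function.Injective fun i : ℕ => s(i, i + 1) := by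
  intro i j h
  simp only [Sym2.eq_iff] at h
  omega

theorem segE_erase (b p q : ℕ) (hp : 1 ≤ p) (hq : 1 ≤ q) :
    (segE b (p + q)).erase s(b + p - 1, b + p) = segE b p ∪ segE (b + p) q := by
  have he : s(b + p - 1, b + p) = s(b + p - 1, b + p - 1 + 1) := by
    rw [Nat.sub_add_cancel (by omega)]
  rw [he, segE, ← Finset.image_erase injective_sym2_mk_succ, segE, segE, ← Finset.image_union]
  congr 1
  ext v; simp only [mem_segV, Finset.mem_erase, Finset.mem_union]; omega

theorem segE_filter_left (b m : ℕ) :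
    (segE b (m + 1)).filter (b ∉ ·) = segE (b + 1) m := by
  rw [segE, Finset.filter_image, segE]
  congr 1
  ext v; simp only [mem_segV, Finset.mem_filter, Sym2.mem_iff]; omega

theorem segE_filter_add (b p q : ℕ) :
    (segE b (p + 1 + q)).filter (b + p ∉ ·) = segE b p ∪ segE (b + p + 1) q := by
  rw [segE, Finset.filter_image, segE, segE, ← Finset.image_union]
  congr 1
  ext v; simp only [mem_segV, Finset.mem_filter, Finset.mem_union, Sym2.mem_iff]; omega

/-- Deleting an edge at an end of a path would isolate that end vertex. -/
theorem exists_cut_of_forall_mem_erase {b m : ℕ} {e : Sym2 ℕ}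
    (hcov : ∀ v ∈ segV b m, ∃ e' ∈ (segE b m).erase e, v ∈ e') (he : e ∈ segE b m) :
    ∃ p q, 2 ≤ p ∧ 2 ≤ q ∧ m = p + q ∧ e = s(b + p - 1, b + p) := by
  obtain ⟨i, hi, rfl⟩ := mem_segE.1 he
  have hcov' : ∀ v ∈ segV b m, ∃ j, (b ≤ j ∧ j + 1 < b + m) ∧ j ≠ i ∧ (v = j ∨ v = j + 1) := by
    intro v hv
    obtain ⟨e', he', hve'⟩ := hcov v hv
    obtain ⟨hne, he'⟩ := Finset.mem_erase.1 he'
    obtain ⟨j, hj, rfl⟩ := mem_segE.1 he'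
    exact ⟨j, hj, fun hji => hne (hji ▸ rfl), Sym2.mem_iff.1 hve'⟩
  obtain ⟨j, hj, hji, hbj⟩ := hcov' b (mem_segV.2 ⟨le_rfl, by omega⟩)
  obtain ⟨k, hk, hki, hbk⟩ := hcov' (b + m - 1) (mem_segV.2 ⟨by omega, by omega⟩)
  refine ⟨i + 1 - b, b + m - (i + 1), by omega, by omega, by omega, ?_⟩
  rw [show b + (i + 1 - b) - 1 = i by omega, show b + (i + 1 - b) = i + 1 by omega]

/-- `(V, E)` is a disjoint union of paths with at least two vertices each, and `M` is the
multiset of their numbers of vertices. -/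
inductive IsPathForest : Finset ℕ → Finset (Sym2 ℕ) → Multiset ℕ → Prop
  | empty : IsPathForest ∅ ∅ 0
  | cons {V : Finset ℕ} {E : Finset (Sym2 ℕ)} {M : Multiset ℕ} (b m : ℕ) :
      2 ≤ m → Disjoint (segV b m) V → IsPathForest V E M →
        IsPathForest (segV b m ∪ V) (segE b m ∪ E) (m ::ₘ M)

theorem isPathForest_path {n : ℕ} (hn : 2 ≤ n) :
    IsPathForest (Finset.range n) (pathE n) {n} := by
  have hV (k : ℕ) : segV 0 k = Finset.range k := by rw [segV, zero_add, Finset.range_eq_Ico]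
  have := IsPathForest.empty.cons 0 n hn (Finset.disjoint_empty_right _)
  rwa [Finset.union_empty, Finset.union_empty, hV, segE, hV] at this

namespace IsPathForest

variable {V : Finset ℕ} {E : Finset (Sym2 ℕ)} {M : Multiset ℕ}

theorem mem_of_mem_edge (h : IsPathForest V E M) {e : Sym2 ℕ} (he : e ∈ E) {v : ℕ}
    (hv : v ∈ e) : v ∈ V := by
  induction h with
  | empty => simp at he
  | cons b m _ _ _ ih =>
    rcases Finset.mem_union.1 he with he | he
    · exact Finset.mem_union_left _ (mem_segV_of_mem_segE he hv)
    · exact Finset.mem_union_right _ (ih he)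

theorem filter_notMem_eq (h : IsPathForest V E M) {v : ℕ} (hv : v ∉ V) :
    E.filter (v ∉ ·) = E :=
  Finset.filter_true_of_mem fun _ he hve => hv (h.mem_of_mem_edge he hve)

theorem noIsol (h : IsPathForest V E M) : NoIsol V E := by
  rw [noIsol_iff]
  induction h with
  | empty => simp
  | cons b m hm _ _ ih =>
    intro v hv
    rcases Finset.mem_union.1 hv with hv | hv
    · rw [mem_segV] at hv
      obtain ⟨i, hi, hvi⟩ : ∃ i, (b ≤ i ∧ i + 1 < b + m) ∧ (v = i ∨ v = i + 1) :=
        if hlt : v + 1 < b + m then ⟨v, ⟨hv.1, hlt⟩, Or.inl rfl⟩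
        else ⟨v - 1, ⟨by omega, by omega⟩, Or.inr (by omega)⟩
      exact ⟨s(i, i + 1), Finset.mem_union_left _ (mem_segE.2 ⟨i, hi, rfl⟩), Sym2.mem_iff.2 hvi⟩
    · obtain ⟨e, he, hve⟩ := ih v hv
      exact ⟨e, Finset.mem_union_right _ he, hve⟩

theorem exists_eq_cons {m : ℕ} {R : Multiset ℕ} (h : IsPathForest V E (m ::ₘ R)) :
    ∃ b V' E', 2 ≤ m ∧ Disjoint (segV b m) V' ∧ IsPathForest V' E' R ∧
      V = segV b m ∪ V' ∧ E = segE b m ∪ E' := by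
  generalize hM : m ::ₘ R = M at h
  induction h generalizing R with
  | empty => exact absurd hM Multiset.cons_ne_zero
  | @cons V₀ E₀ M₀ b₀ m₀ hm₀ hd₀ h₀ ih =>
    rcases Multiset.cons_eq_cons.1 hM with ⟨rfl, rfl⟩ | ⟨-, R₀, rfl, hR₀⟩
    · exact ⟨b₀, V₀, E₀, hm₀, hd₀, h₀, rfl, rfl⟩
    obtain ⟨b, V', E', hm, hd, h', rfl, rfl⟩ := ih hR₀.symm
    rw [Finset.disjoint_union_right] at hd₀
    refine ⟨b, segV b₀ m₀ ∪ V', segE b₀ m₀ ∪ E', hm, ?_, h'.cons b₀ m₀ hm₀ hd₀.2,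
      Finset.union_left_comm .., Finset.union_left_comm ..⟩
    exact Finset.disjoint_union_right.2 ⟨hd₀.1.symm, hd⟩

theorem cut (h : IsPathForest V E M) {b p q : ℕ} (hp : 2 ≤ p) (hq : 2 ≤ q)
    (hd : Disjoint (segV b (p + q)) V) :
    IsPathForest (segV b (p + q) ∪ V) ((segE b (p + q) ∪ E).erase s(b + p - 1, b + p))
      (p ::ₘ q ::ₘ M) := by
  have hE : s(b + p - 1, b + p) ∉ E := fun he => Finset.disjoint_left.1 hd
    (mem_segV.2 ⟨by omega, by omega⟩) (h.mem_of_mem_edge he (Sym2.mem_mk_right _ _))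
  rw [Finset.erase_union_distrib, Finset.erase_eq_of_notMem hE,
    segE_erase b p q (by omega) (by omega), segV_add, Finset.union_assoc, Finset.union_assoc]
  rw [segV_add, Finset.disjoint_union_left] at hd
  exact .cons b p hp (Finset.disjoint_union_right.2 ⟨disjoint_segV le_rfl, hd.1⟩)
    (.cons (b + p) q hq hd.2 h)

theorem shrink (h : IsPathForest V E M) {b m : ℕ} (hm : 2 ≤ m)
    (hd : Disjoint (segV b (m + 1)) V) :
    IsPathForest ((segV b (m + 1) ∪ V).erase b) ((segE b (m + 1) ∪ E).filter (b ∉ ·))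
      (m ::ₘ M) := by
  have hb : b ∉ V := Finset.disjoint_left.1 hd (mem_segV.2 ⟨le_rfl, by omega⟩)
  rw [Finset.erase_union_distrib, Finset.erase_eq_of_notMem hb, Finset.filter_union,
    h.filter_notMem_eq hb, segV_erase_left, segE_filter_left]
  refine .cons (b + 1) m hm (Finset.disjoint_of_subset_left ?_ hd) h
  rw [← segV_erase_left]
  exact Finset.erase_subset _ _

theorem split (h : IsPathForest V E M) {b p q : ℕ} (hp : 2 ≤ p) (hq : 2 ≤ q)
    (hd : Disjoint (segV b (p + 1 + q)) V) :
    IsPathForest ((segV b (p + 1 + q) ∪ V).erase (b + p))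
      ((segE b (p + 1 + q) ∪ E).filter (b + p ∉ ·)) (p ::ₘ q ::ₘ M) := by
  have hb : b + p ∉ V := Finset.disjoint_left.1 hd (mem_segV.2 ⟨by omega, by omega⟩)
  rw [Finset.erase_union_distrib, Finset.erase_eq_of_notMem hb, Finset.filter_union,
    h.filter_notMem_eq hb, segV_erase_add, segE_filter_add, Finset.union_assoc,
    Finset.union_assoc]
  have hsub := segV_erase_add b p q ▸ Finset.erase_subset (b + p) (segV b (p + 1 + q))
  rw [Finset.union_subset_iff] at hsub
  exact .cons b p hp (Finset.disjoint_union_right.2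
    ⟨disjoint_segV (by omega), Finset.disjoint_of_subset_left hsub.1 hd⟩)
    (.cons (b + p + 1) q hq (Finset.disjoint_of_subset_left hsub.2 hd) h)

theorem exists_vertex_of_leftMove (h : IsPathForest V E M) {M' : Multiset ℕ}
    (hM : LeftMove M M') : ∃ v ∈ V, IsPathForest (V.erase v) (E.filter (v ∉ ·)) M' := by
  cases hM with
  | shrink m R hm =>
    obtain ⟨b, V', E', -, hd, h', rfl, rfl⟩ := h.exists_eq_cons
    exact ⟨b, Finset.mem_union_left _ (mem_segV.2 ⟨le_rfl, by omega⟩), h'.shrink hm hd⟩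
  | split p q R hp hq =>
    obtain ⟨b, V', E', -, hd, h', rfl, rfl⟩ := h.exists_eq_cons
    exact ⟨b + p, Finset.mem_union_left _ (mem_segV.2 ⟨by omega, by omega⟩), h'.split hp hq hd⟩

theorem exists_rightOK (h : IsPathForest V E M) {m : ℕ} (hm : m ∈ M) (h4 : 4 ≤ m) :
    ∃ e, RightOK V E e := by
  obtain ⟨R, rfl⟩ := Multiset.exists_cons_of_mem hm
  obtain ⟨b, V', E', -, hd, h', rfl, rfl⟩ := h.exists_eq_cons
  obtain ⟨q, rfl⟩ : ∃ q, m = 2 + q := ⟨m - 2, by omega⟩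
  refine ⟨_, Finset.mem_union_left _ ?_, (h'.cut le_rfl (by omega) hd).noIsol⟩
  exact mem_segE.2 ⟨b + 1, ⟨by omega, by omega⟩, by rw [show b + 2 - 1 = b + 1 by omega]⟩

theorem exists_rightMove_of_rightOK (h : IsPathForest V E M) {e : Sym2 ℕ}
    (he : RightOK V E e) : ∃ M', RightMove M M' ∧ IsPathForest V (E.erase e) M' := by
  induction h with
  | empty => exact absurd he.1 (Finset.notMem_empty e)
  | @cons V E M b m hm hd h ih =>
    obtain ⟨he, hiso⟩ := he
    rw [noIsol_iff] at hiso
    have hE : ∀ e ∈ E, ∀ v ∈ segV b m, v ∉ e := fun e he v hv hve =>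
      Finset.disjoint_left.1 hd hv (h.mem_of_mem_edge he hve)
    rcases Finset.mem_union.1 he with he | he
    · have hcov : ∀ v ∈ segV b m, ∃ e' ∈ (segE b m).erase e, v ∈ e' := by
        intro v hv
        obtain ⟨e', he', hve'⟩ := hiso v (Finset.mem_union_left _ hv)
        rw [Finset.mem_erase, Finset.mem_union] at he'
        exact ⟨e', Finset.mem_erase.2 ⟨he'.1, he'.2.resolve_right fun h => hE e' h v hv hve'⟩,
          hve'⟩
      obtain ⟨p, q, hp, hq, rfl, rfl⟩ := exists_cut_of_forall_mem_erase hcov he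
      exact ⟨_, .cut p q M hp hq, h.cut hp hq hd⟩
    · have heS : e ∉ segE b m := fun he' => by
        obtain ⟨i, hi, rfl⟩ := mem_segE.1 he'
        exact hE _ he i (mem_segV.2 ⟨hi.1, by omega⟩) (Sym2.mem_mk_left _ _)
      have hcov : NoIsol V (E.erase e) := by
        rw [noIsol_iff]
        intro v hv
        obtain ⟨e', he', hve'⟩ := hiso v (Finset.mem_union_right _ hv)
        rw [Finset.mem_erase, Finset.mem_union] at he'
        refine ⟨e', Finset.mem_erase.2 ⟨he'.1, he'.2.resolve_left fun h => ?_⟩, hve'⟩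
        exact Finset.disjoint_left.1 hd (mem_segV_of_mem_segE h hve') hv
      obtain ⟨M', hM', h'⟩ := ih ⟨he, hcov⟩
      refine ⟨m ::ₘ M', hM'.cons m, ?_⟩
      rw [Finset.erase_union_distrib, Finset.erase_eq_of_notMem heS]
      exact .cons b m hm hd h'

end IsPathForest

theorem IsPathForest.leftWins_mfG {V : Finset ℕ} {E : Finset (Sym2 ℕ)} {M : Multiset ℕ}
    (h : IsPathForest V E M) :
    (LeftWinsFirst M → 0 ⧏ mfG V E) ∧ (LeftWinsSecond M → 0 ≤ mfG V E) := by
  refine ⟨fun hF => ?_, fun hS => ?_⟩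
  · obtain ⟨M', hmove, hS'⟩ := hF.exists_leftMove
    obtain ⟨v, hv, h'⟩ := h.exists_vertex_of_leftMove hmove
    obtain ⟨m, hm, h4⟩ := Multiset.countP_pos.1 hF.1
    rw [mfG, zero_lf_mk]
    exact ⟨⟨v, ⟨hv, h'.noIsol⟩, h.exists_rightOK hm h4⟩, h'.leftWins_mfG.2 hS'⟩
  · rw [mfG, zero_le_mk]
    rintro ⟨e, he, -⟩
    obtain ⟨M', hmove, h'⟩ := h.exists_rightMove_of_rightOK he
    exact h'.leftWins_mfG.1 (hS.leftWinsFirst_of_rightMove hmove)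
termination_by V.card + E.card
decreasing_by
  · have := Finset.card_erase_lt_of_mem hv
    have := Finset.card_filter_le E (v ∉ ·)
    omega
  · have := Finset.card_erase_lt_of_mem he.1
    omega

/-- For every `n ≥ 9`, Left wins the Mutual Failures Variant on the path `P_n`
regardless of which player moves first, i.e. `P_n > 0`. -/
theorem mf_path_left_wins : ∀ n : ℕ, 9 ≤ n → 0 < mfPath n := by
  intro n hn
  have hF : LeftWinsFirst {n} := by
    simp only [LeftWinsFirst, numLong, ← Multiset.cons_zero, Multiset.count_cons,
      Multiset.countP_cons, Multiset.count_zero, Multiset.countP_zero]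
    grind
  have hS : LeftWinsSecond {n} := by
    simp only [LeftWinsSecond, numLong, ← Multiset.cons_zero, Multiset.count_cons,
      Multiset.countP_cons, Multiset.count_zero, Multiset.countP_zero]
    grind
  have h := (isPathForest_path (by omega : 2 ≤ n)).leftWins_mfG
  exact ⟨h.2 hS, h.1 hF⟩

end MixedDeletion
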